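/- arXiv:2201.13158 — 3 statements merged into one kernel-verified Lean document; each statement's English description precedes it below -/
import Mathlib

section
/- For weak orders π and σ on a finite set P, the directed Hausdorff–Kendall-tau distance admits the characterization →τ(π,σ) = Σ n_{pq} · n_{p'q'}, where the sum is over all p, p' ∈ {1,…,r_π} with p < p' and all q, q' ∈ {1,…,r_σ} with q ≥ q'. -/
/-! Basic machinery: weak orders, linear extensions, Kendall-tau,
and the directed Hausdorff–Kendall-tau distance. -/

section Orders

variable {P : Type*}

/-- The strict part `x ▷ y` of a relation `R`. -/
def strictOf (R : P → P → Prop) (x y : P) : Prop := R x y ∧ ¬ R y x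

/-- The indifference part `x ∼ y` of a relation `R`. -/
def indiffOf (R : P → P → Prop) (x y : P) : Prop := R x y ∧ R y x

/-- `R` is a weak order (total preorder) on the finite set `S`. -/
structure IsWeakOrderOn (S : Finset P) (R : P → P → Prop) : Prop where
  refl : ∀ x ∈ S, R x x
  trans : ∀ x ∈ S, ∀ y ∈ S, ∀ z ∈ S, R x y → R y z → R x z
  total : ∀ x ∈ S, ∀ y ∈ S, R x y ∨ R y x

/-- `A` is a linear extension on `S` of the weak order `R`: a strict total
order on `S` which is consistent with the strict part of `R`. -/
structure IsLinExtOn (S : Finset P) (R : P → P → Prop) (A : P → P → Prop) : Prop where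
  irrefl : ∀ x ∈ S, ¬ A x x
  trans : ∀ x ∈ S, ∀ y ∈ S, ∀ z ∈ S, A x y → A y z → A x z
  total : ∀ x ∈ S, ∀ y ∈ S, x ≠ y → A x y ∨ A y x
  extend : ∀ x ∈ S, ∀ y ∈ S, strictOf R x y → A x y

/-- The Kendall-tau distance between two strict (linear) orders on `S`:
the number of pairs ordered oppositely by the two orders. -/
noncomputable def kendallTau (S : Finset P) (A B : P → P → Prop) : ℕ :=
  Set.ncard {p : P × P | p.1 ∈ S ∧ p.2 ∈ S ∧ A p.1 p.2 ∧ B p.2 p.1}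

/-- The directed Hausdorff–Kendall-tau distance `→τ(R1,R2)` between weak orders on `S`:
the maximum over linear extensions `B` of `R2` of the minimum over linear
extensions `A` of `R1` of `τ(A,B)`. -/
noncomputable def dirTau (S : Finset P) (R1 R2 : P → P → Prop) : ℕ :=
  sSup { n : ℕ | ∃ B : P → P → Prop, IsLinExtOn S R2 B ∧
    n = sInf { m : ℕ | ∃ A : P → P → Prop, IsLinExtOn S R1 A ∧ m = kendallTau S A B } }

/-- The (undirected) Hausdorff–Kendall-tau distance `τ*`. -/
noncomputable def hkTau (S : Finset P) (R1 R2 : P → P → Prop) : ℕ :=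
  max (dirTau S R1 R2) (dirTau S R2 R1)

end Orders

section Ranks

variable {P : Type*}

/-- The rank of `x` in the weak order `R` on `S`: `1` plus the number of
indifference classes ranked strictly above `x`. -/
noncomputable def rankIn (S : Finset P) (R : P → P → Prop) (x : P) : ℕ :=
  1 + Set.ncard { c : Set P | ∃ y ∈ S, strictOf R y x ∧ c = {z | z ∈ S ∧ indiffOf R z y} }

/-- The maximal rank occurring in the weak order `R` on `S`. -/
noncomputable def maxRank (S : Finset P) (R : P → P → Prop) : ℕ :=
  sSup (rankIn S R '' (S : Set P))

/-- `n_{pq}`: the number of elements of `S` of rank `p` in `π` and rank `q` in `σ`. -/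
noncomputable def rankCount (S : Finset P) (π σ : P → P → Prop) (p q : ℕ) : ℕ :=
  Set.ncard {x : P | x ∈ S ∧ rankIn S π x = p ∧ rankIn S σ x = q}

end Ranks

section Aux
variable {P : Type*}

/-- Refining a weak order by another relation. -/
def refineRel (R A : P → P → Prop) (x y : P) : Prop :=
  strictOf R x y ∨ (indiffOf R x y ∧ A x y)

/-- A strict total order on `S` (no extension condition). -/
structure IsSTO (S : Finset P) (A : P → P → Prop) : Prop where
  irrefl : ∀ x ∈ S, ¬ A x x
  trans : ∀ x ∈ S, ∀ y ∈ S, ∀ z ∈ S, A x y → A y z → A x z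
  total : ∀ x ∈ S, ∀ y ∈ S, x ≠ y → A x y ∨ A y x

lemma IsLinExtOn.toSTO {S : Finset P} {R A : P → P → Prop} (h : IsLinExtOn S R A) :
    IsSTO S A := ⟨h.irrefl, h.trans, h.total⟩

lemma IsSTO.asymm {S : Finset P} {A : P → P → Prop} (h : IsSTO S A)
    {x y : P} (hx : x ∈ S) (hy : y ∈ S) (hxy : A x y) : ¬ A y x :=
  fun hyx => h.irrefl x hx (h.trans x hx y hy x hx hxy hyx)

lemma IsSTO.swap {S : Finset P} {A : P → P → Prop} (h : IsSTO S A) :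
    IsSTO S (fun x y => A y x) where
  irrefl := fun x hx => h.irrefl x hx
  trans := fun x hx y hy z hz h1 h2 => h.trans z hz y hy x hx h2 h1
  total := fun x hx y hy hne => h.total y hy x hx (Ne.symm hne)

lemma refine_linext {S : Finset P} {R A : P → P → Prop}
    (hR : IsWeakOrderOn S R) (hA : IsSTO S A) :
    IsLinExtOn S R (refineRel R A) where
  irrefl := by
    intro x hx h
    rcases h with ⟨h1, h2⟩ | ⟨_, h2⟩
    · exact h2 h1
    · exact hA.irrefl x hx h2
  trans := by
    rintro x hx y hy z hz (⟨h1, h2⟩ | ⟨⟨h1, h1'⟩, h2⟩) (⟨g1, g2⟩ | ⟨⟨g1, g1'⟩, g2⟩)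
    · exact Or.inl ⟨hR.trans x hx y hy z hz h1 g1,
        fun hzx => g2 (hR.trans z hz x hx y hy hzx h1)⟩
    · exact Or.inl ⟨hR.trans x hx y hy z hz h1 g1,
        fun hzx => h2 (hR.trans y hy z hz x hx g1 hzx)⟩
    · exact Or.inl ⟨hR.trans x hx y hy z hz h1 g1,
        fun hzx => g2 (hR.trans z hz x hx y hy hzx h1)⟩
    · exact Or.inr ⟨⟨hR.trans x hx y hy z hz h1 g1, hR.trans z hz y hy x hx g1' h1'⟩,
        hA.trans x hx y hy z hz h2 g2⟩
  total := by
    intro x hx y hy hne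
    rcases hR.total x hx y hy with h | h
    · by_cases h' : R y x
      · rcases hA.total x hx y hy hne with g | g
        · exact Or.inl (Or.inr ⟨⟨h, h'⟩, g⟩)
        · exact Or.inr (Or.inr ⟨⟨h', h⟩, g⟩)
      · exact Or.inl (Or.inl ⟨h, h'⟩)
    · by_cases h' : R x y
      · rcases hA.total x hx y hy hne with g | g
        · exact Or.inl (Or.inr ⟨⟨h', h⟩, g⟩)
        · exact Or.inr (Or.inr ⟨⟨h, h'⟩, g⟩)
      · exact Or.inr (Or.inl ⟨h, h'⟩)
  extend := fun _ _ _ _ h => Or.inl h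

/-- The well-ordering relation is an STO on any finset. -/
lemma wellOrderingRel_sto (S : Finset P) : IsSTO S (WellOrderingRel (α := P)) where
  irrefl := fun x _ => irrefl x
  trans := fun x _ y _ z _ => _root_.trans
  total := fun x _ y _ hne => (trichotomous x y).imp_right (fun h => h.resolve_left hne)

variable {S : Finset P} {π σ : P → P → Prop}

/-- The discordance set. -/
def discSet (S : Finset P) (π σ : P → P → Prop) : Set (P × P) :=
  {p : P × P | p.1 ∈ S ∧ p.2 ∈ S ∧ strictOf π p.1 p.2 ∧ σ p.2 p.1}

lemma discSet_finite : (discSet S π σ).Finite :=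
  (S.finite_toSet.prod S.finite_toSet).subset (fun p hp => ⟨hp.1, hp.2.1⟩)

lemma kt_finite (A B : P → P → Prop) :
    {p : P × P | p.1 ∈ S ∧ p.2 ∈ S ∧ A p.1 p.2 ∧ B p.2 p.1}.Finite :=
  (S.finite_toSet.prod S.finite_toSet).subset (fun p hp => ⟨hp.1, hp.2.1⟩)

/-- Upper bound: the refinement of π by B has kendallTau ≤ the disc count. -/
lemma kt_refine_le (hπ : IsWeakOrderOn S π) (hσ : IsWeakOrderOn S σ)
    {B : P → P → Prop} (hB : IsLinExtOn S σ B) :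
    kendallTau S (refineRel π B) B ≤ (discSet S π σ).ncard := by
  apply Set.ncard_le_ncard _ discSet_finite
  rintro ⟨x, y⟩ ⟨hx, hy, hA, hBxy⟩
  refine ⟨hx, hy, ?_, ?_⟩
  · rcases hA with h | ⟨_, h⟩
    · exact h
    · exact absurd hBxy (hB.toSTO.asymm hx hy h)
  · by_contra hne
    rcases hσ.total y hy x hx with h | h
    · exact hne h
    · exact hB.toSTO.asymm hy hx hBxy (hB.extend x hx y hy ⟨h, hne⟩)

/-- Lower bound: any lin ext A of π versus the adversarial B0. -/
lemma kt_ge (hπ : IsWeakOrderOn S π) (hσ : IsWeakOrderOn S σ)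
    {A : P → P → Prop} (hA : IsLinExtOn S π A) :
    (discSet S π σ).ncard ≤
      kendallTau S A (refineRel σ (fun a b => refineRel π WellOrderingRel b a)) := by
  apply Set.ncard_le_ncard _ (kt_finite _ _)
  rintro ⟨x, y⟩ ⟨hx, hy, hst, hsyx⟩
  refine ⟨hx, hy, hA.extend x hx y hy hst, ?_⟩
  by_cases h' : σ x y
  · exact Or.inr ⟨⟨hsyx, h'⟩, Or.inl hst⟩
  · exact Or.inl ⟨hsyx, h'⟩

lemma dirTau_eq_discSet (hπ : IsWeakOrderOn S π) (hσ : IsWeakOrderOn S σ) :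
    dirTau S π σ = (discSet S π σ).ncard := by
  set N := (discSet S π σ).ncard
  have hBle : ∀ B : P → P → Prop, IsLinExtOn S σ B →
      sInf { m : ℕ | ∃ A : P → P → Prop, IsLinExtOn S π A ∧ m = kendallTau S A B } ≤ N := by
    intro B hB
    exact le_trans (Nat.sInf_le ⟨refineRel π B, refine_linext hπ hB.toSTO, rfl⟩)
      (kt_refine_le hπ hσ hB)
  have hub : ∀ n ∈ { n : ℕ | ∃ B : P → P → Prop, IsLinExtOn S σ B ∧
      n = sInf { m : ℕ | ∃ A : P → P → Prop, IsLinExtOn S π A ∧ m = kendallTau S A B } },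
      n ≤ N := by
    rintro n ⟨B, hB, rfl⟩
    exact hBle B hB
  -- the adversarial B0
  set B0 : P → P → Prop := refineRel σ (fun a b => refineRel π WellOrderingRel b a) with hB0def
  have hB0 : IsLinExtOn S σ B0 :=
    refine_linext hσ ((refine_linext hπ (wellOrderingRel_sto S)).toSTO.swap)
  set M0 := { m : ℕ | ∃ A : P → P → Prop, IsLinExtOn S π A ∧ m = kendallTau S A B0 }
  have hM0ne : M0.Nonempty :=
    ⟨_, refineRel π WellOrderingRel, refine_linext hπ (wellOrderingRel_sto S), rfl⟩
  have hgeN : N ≤ sInf M0 := by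
    apply le_csInf hM0ne
    rintro m ⟨A, hA, rfl⟩
    exact kt_ge hπ hσ hA
  have hmem : sInf M0 ∈ { n : ℕ | ∃ B : P → P → Prop, IsLinExtOn S σ B ∧
      n = sInf { m : ℕ | ∃ A : P → P → Prop, IsLinExtOn S π A ∧ m = kendallTau S A B } } :=
    ⟨B0, hB0, rfl⟩
  have hEq : sInf M0 = N := le_antisymm (hub _ hmem) hgeN
  apply le_antisymm
  · exact csSup_le ⟨_, hmem⟩ hub
  · rw [← hEq]
    exact le_csSup ⟨N, hub⟩ hmem

end Aux


section Ranks2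
variable {P : Type*}

variable {S : Finset P} {R : P → P → Prop}

/-- The set of indifference classes above `x`. -/
def aboveClasses (S : Finset P) (R : P → P → Prop) (x : P) : Set (Set P) :=
  { c : Set P | ∃ y ∈ S, strictOf R y x ∧ c = {z | z ∈ S ∧ indiffOf R z y} }

lemma rankIn_eq (x : P) : rankIn S R x = 1 + (aboveClasses S R x).ncard := rfl

lemma aboveClasses_finite (x : P) : (aboveClasses S R x).Finite := by
  have : aboveClasses S R x ⊆
      (fun y => {z | z ∈ S ∧ indiffOf R z y}) '' (S : Set P) := by
    rintro c ⟨y, hy, _, rfl⟩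
    exact ⟨y, hy, rfl⟩
  exact (S.finite_toSet.image _).subset this

lemma aboveClasses_mono (hR : IsWeakOrderOn S R) {x y : P} (hx : x ∈ S) (hy : y ∈ S)
    (h : R x y) : aboveClasses S R x ⊆ aboveClasses S R y := by
  rintro c ⟨z, hz, ⟨h1, h2⟩, rfl⟩
  exact ⟨z, hz, ⟨hR.trans z hz x hx y hy h1 h,
    fun hyz => h2 (hR.trans x hx y hy z hz h hyz)⟩, rfl⟩

lemma aboveClasses_mem (hR : IsWeakOrderOn S R) {x y : P} (hx : x ∈ S) (hy : y ∈ S)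
    (h : strictOf R x y) :
    {z | z ∈ S ∧ indiffOf R z x} ∈ aboveClasses S R y \ aboveClasses S R x := by
  constructor
  · exact ⟨x, hx, h, rfl⟩
  · rintro ⟨z, hz, hzx, heq⟩
    have hxmem : x ∈ {w | w ∈ S ∧ indiffOf R w x} := ⟨hx, hR.refl x hx, hR.refl x hx⟩
    rw [heq] at hxmem
    exact hzx.2 hxmem.2.1

lemma rankIn_lt (hR : IsWeakOrderOn S R) {x y : P} (hx : x ∈ S) (hy : y ∈ S)
    (h : strictOf R x y) : rankIn S R x < rankIn S R y := by
  rw [rankIn_eq, rankIn_eq]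
  have hsub : aboveClasses S R x ⊂ aboveClasses S R y := by
    refine ⟨aboveClasses_mono hR hx hy h.1, fun hsup => ?_⟩
    exact (aboveClasses_mem hR hx hy h).2 (hsup (aboveClasses_mem hR hx hy h).1)
  exact Nat.add_lt_add_left (Set.ncard_lt_ncard hsub (aboveClasses_finite y)) 1

lemma rankIn_lt_iff (hR : IsWeakOrderOn S R) {x y : P} (hx : x ∈ S) (hy : y ∈ S) :
    strictOf R x y ↔ rankIn S R x < rankIn S R y := by
  constructor
  · exact rankIn_lt hR hx hy
  · intro h
    by_contra hc
    rcases hR.total x hx y hy with h1 | h1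
    · by_cases h2 : R y x
      · have := le_antisymm (aboveClasses_mono hR hx hy h1) (aboveClasses_mono hR hy hx h2)
        rw [rankIn_eq, rankIn_eq, this] at h
        exact lt_irrefl _ h
      · exact hc ⟨h1, h2⟩
    · by_cases h2 : R x y
      · have := le_antisymm (aboveClasses_mono hR hx hy h2) (aboveClasses_mono hR hy hx h1)
        rw [rankIn_eq, rankIn_eq, this] at h
        exact lt_irrefl _ h
      · exact absurd (rankIn_lt hR hy hx ⟨h1, h2⟩) (by omega)

lemma rankIn_le_iff (hR : IsWeakOrderOn S R) {x y : P} (hx : x ∈ S) (hy : y ∈ S) :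
    R x y ↔ rankIn S R x ≤ rankIn S R y := by
  constructor
  · intro h
    by_cases h2 : R y x
    · have heq : aboveClasses S R x = aboveClasses S R y :=
        le_antisymm (aboveClasses_mono hR hx hy h) (aboveClasses_mono hR hy hx h2)
      rw [rankIn_eq, rankIn_eq, heq]
    · exact le_of_lt (rankIn_lt hR hx hy ⟨h, h2⟩)
  · intro h
    by_contra hc
    have := rankIn_lt hR hy hx ⟨(hR.total x hx y hy).resolve_left hc, hc⟩
    omega

lemma one_le_rankIn (x : P) : 1 ≤ rankIn S R x := Nat.le_add_right 1 _

lemma rankIn_le_maxRank {x : P} (hx : x ∈ S) : rankIn S R x ≤ maxRank S R := by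
  apply le_csSup
  · exact (S.finite_toSet.image _).bddAbove
  · exact ⟨x, hx, rfl⟩

lemma rankIn_mem_Icc {x : P} (hx : x ∈ S) :
    rankIn S R x ∈ Finset.Icc 1 (maxRank S R) :=
  Finset.mem_Icc.mpr ⟨one_le_rankIn x, rankIn_le_maxRank hx⟩

end Ranks2


section Count
variable {P : Type*} {S : Finset P} {π σ : P → P → Prop}

lemma rankCount_eq_card [DecidableEq P] [DecidablePred (fun x => rankIn S π x = 1)]
    (p q : ℕ) [DecidablePred (fun x => rankIn S π x = p ∧ rankIn S σ x = q)] :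
    rankCount S π σ p q
      = (S.filter (fun x => rankIn S π x = p ∧ rankIn S σ x = q)).card := by
  rw [rankCount, ← Set.ncard_coe_finset]
  congr 1
  ext x
  simp [Finset.mem_filter, and_assoc]

lemma discSet_ncard_eq (hπ : IsWeakOrderOn S π) (hσ : IsWeakOrderOn S σ) :
    (discSet S π σ).ncard =
      ∑ p ∈ Finset.Icc 1 (maxRank S π), ∑ p' ∈ Finset.Icc 1 (maxRank S π),
        ∑ q ∈ Finset.Icc 1 (maxRank S σ), ∑ q' ∈ Finset.Icc 1 (maxRank S σ),
          if p < p' ∧ q' ≤ q then rankCount S π σ p q * rankCount S π σ p' q' else 0 := by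
  classical
  set rπ := rankIn S π
  set rσ := rankIn S σ
  set t : Finset (P × P) :=
    (S ×ˢ S).filter (fun z => rπ z.1 < rπ z.2 ∧ rσ z.2 ≤ rσ z.1) with ht
  have hA : (discSet S π σ).ncard = t.card := by
    rw [← Set.ncard_coe_finset]
    congr 1
    ext ⟨x, y⟩
    simp only [discSet, Set.mem_setOf_eq, ht, Finset.coe_filter, Finset.mem_product]
    constructor
    · rintro ⟨hx, hy, hst, hsyx⟩
      exact ⟨⟨hx, hy⟩, (rankIn_lt_iff hπ hx hy).mp hst, (rankIn_le_iff hσ hy hx).mp hsyx⟩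
    · rintro ⟨⟨hx, hy⟩, h1, h2⟩
      exact ⟨hx, hy, (rankIn_lt_iff hπ hx hy).mpr h1, (rankIn_le_iff hσ hy hx).mpr h2⟩
  rw [hA]
  set f : P × P → ℕ × ℕ × ℕ × ℕ := fun z => (rπ z.1, rπ z.2, rσ z.1, rσ z.2) with hf
  set B4 : Finset (ℕ × ℕ × ℕ × ℕ) :=
    Finset.Icc 1 (maxRank S π) ×ˢ (Finset.Icc 1 (maxRank S π) ×ˢ
      (Finset.Icc 1 (maxRank S σ) ×ˢ Finset.Icc 1 (maxRank S σ))) with hB4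
  have hmap : ∀ z ∈ t, f z ∈ B4 := by
    rintro ⟨x, y⟩ hz
    rw [ht, Finset.mem_filter, Finset.mem_product] at hz
    obtain ⟨⟨hx, hy⟩, -⟩ := hz
    simp only [hB4, hf, Finset.mem_product]
    exact ⟨rankIn_mem_Icc hx, rankIn_mem_Icc hy, rankIn_mem_Icc hx, rankIn_mem_Icc hy⟩
  rw [Finset.card_eq_sum_card_fiberwise hmap]
  rw [hB4, Finset.sum_product]
  refine Finset.sum_congr rfl fun p hp => ?_
  rw [Finset.sum_product]
  refine Finset.sum_congr rfl fun p' hp' => ?_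
  rw [Finset.sum_product]
  refine Finset.sum_congr rfl fun q hq => ?_
  refine Finset.sum_congr rfl fun q' hq' => ?_
  -- fiber computation
  by_cases hcond : p < p' ∧ q' ≤ q
  · rw [if_pos hcond]
    have hfib : t.filter (fun z => f z = (p, p', q, q'))
        = (S.filter (fun x => rπ x = p ∧ rσ x = q)) ×ˢ
          (S.filter (fun y => rπ y = p' ∧ rσ y = q')) := by
      ext ⟨x, y⟩
      simp only [ht, hf, Finset.mem_filter, Finset.mem_product, Prod.mk.injEq]
      constructor
      · rintro ⟨⟨⟨hx, hy⟩, -⟩, h1, h2, h3, h4⟩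
        exact ⟨⟨hx, h1, h3⟩, hy, h2, h4⟩
      · rintro ⟨⟨hx, h1, h3⟩, hy, h2, h4⟩
        subst h1; subst h2; subst h3; subst h4
        exact ⟨⟨⟨hx, hy⟩, hcond.1, hcond.2⟩, rfl, rfl, rfl, rfl⟩
    rw [hfib, Finset.card_product, rankCount_eq_card, rankCount_eq_card]
  · rw [if_neg hcond]
    rw [Finset.card_eq_zero, Finset.filter_eq_empty_iff]
    rintro ⟨x, y⟩ hz heq
    rw [ht, Finset.mem_filter] at hz
    simp only [hf, Prod.mk.injEq] at heq
    obtain ⟨-, h1, h2⟩ := hz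
    obtain ⟨e1, e2, e3, e4⟩ := heq
    exact hcond ⟨e1 ▸ e2 ▸ h1, e4 ▸ e3 ▸ h2⟩

end Count


/-- The directed Hausdorff–Kendall-tau distance between weak orders `π` and `σ`
on a finite set admits the characterization
`→τ(π,σ) = Σ_{p<p', q≥q'} n_{pq} · n_{p'q'}`. -/
theorem dirTau_eq_rank_sum {P : Type*} (S : Finset P) (π σ : P → P → Prop)
    (hπ : IsWeakOrderOn S π) (hσ : IsWeakOrderOn S σ) :
    dirTau S π σ =
      ∑ p ∈ Finset.Icc 1 (maxRank S π), ∑ p' ∈ Finset.Icc 1 (maxRank S π),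
        ∑ q ∈ Finset.Icc 1 (maxRank S σ), ∑ q' ∈ Finset.Icc 1 (maxRank S σ),
          if p < p' ∧ q' ≤ q then rankCount S π σ p q * rankCount S π σ p' q' else 0 := by
  rw [dirTau_eq_discSet hπ hσ, discSet_ncard_eq hπ hσ]
end

section
/- For every player i and every coalition C containing i, the distance δ(⊵_i,C) between player i's preference order and C equals 0 if and only if N⁺_i ⊆ C and N⁻_i ∩ C = ∅. -/
/-! FEN-hedonic games with distance-based preferences. -/

section Game

/-- A FEN preference for player `i`: disjoint sets of friends and enemies
(not containing `i`) together with weak orders on the friends and on the enemies. -/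
structure FENPref (P : Type*) (i : P) where
  friends : Finset P
  enemies : Finset P
  Rp : P → P → Prop
  Rm : P → P → Prop
  disj : Disjoint friends enemies
  self_not_friend : i ∉ friends
  self_not_enemy : i ∉ enemies
  wo_p : IsWeakOrderOn friends Rp
  wo_m : IsWeakOrderOn enemies Rm

variable {P : Type*} {i : P}

/-- The weak order `⊵⁺_i` on `N⁺_i ∪ {i}`: the friends, ordered by `⊵_i`,
all strictly above `i`. -/
def FENPref.prefPlus (pr : FENPref P i) (x y : P) : Prop :=
  (x ∈ pr.friends ∧ y ∈ pr.friends ∧ pr.Rp x y) ∨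
  (x ∈ pr.friends ∧ y = i) ∨
  (x = i ∧ y = i)

/-- The weak order `⊵⁻_i` on `N⁻_i ∪ {i}`: `i` strictly above all enemies,
which are ordered by `⊵_i`. -/
def FENPref.prefMinus (pr : FENPref P i) (x y : P) : Prop :=
  (x = i ∧ y = i) ∨
  (x = i ∧ y ∈ pr.enemies) ∨
  (x ∈ pr.enemies ∧ y ∈ pr.enemies ∧ pr.Rm x y)

/-- The weak order `C⁺_i` on `N⁺_i ∪ {i}`: friends in `C` strictly above `i`,
ordered by `⊵_i`; friends not in `C` strictly below `i`, ordered by the reverse of `⊵_i`. -/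
def FENPref.coalPlus (pr : FENPref P i) (C : Finset P) (x y : P) : Prop :=
  (x ∈ pr.friends ∧ x ∈ C ∧ y ∈ pr.friends ∧ y ∈ C ∧ pr.Rp x y) ∨
  ((x ∈ pr.friends ∧ x ∈ C) ∧ (y = i ∨ (y ∈ pr.friends ∧ y ∉ C))) ∨
  (x = i ∧ (y = i ∨ (y ∈ pr.friends ∧ y ∉ C))) ∨
  (x ∈ pr.friends ∧ x ∉ C ∧ y ∈ pr.friends ∧ y ∉ C ∧ pr.Rp y x)

/-- The weak order `C⁻_i` on `N⁻_i ∪ {i}`: enemies in `C` strictly above `i`,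
ordered by the reverse of `⊵_i`; enemies not in `C` strictly below `i`, ordered by `⊵_i`. -/
def FENPref.coalMinus (pr : FENPref P i) (C : Finset P) (x y : P) : Prop :=
  (x ∈ pr.enemies ∧ x ∈ C ∧ y ∈ pr.enemies ∧ y ∈ C ∧ pr.Rm y x) ∨
  ((x ∈ pr.enemies ∧ x ∈ C) ∧ (y = i ∨ (y ∈ pr.enemies ∧ y ∉ C))) ∨
  (x = i ∧ (y = i ∨ (y ∈ pr.enemies ∧ y ∉ C))) ∨
  (x ∈ pr.enemies ∧ x ∉ C ∧ y ∈ pr.enemies ∧ y ∉ C ∧ pr.Rm x y)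

variable [DecidableEq P]

/-- `δ⁺(⊵_i, C) = →τ(⊵⁺_i, C⁺_i)`. -/
noncomputable def FENPref.deltaPlus (pr : FENPref P i) (C : Finset P) : ℕ :=
  dirTau (insert i pr.friends) pr.prefPlus (pr.coalPlus C)

/-- `δ⁻(⊵_i, C) = →τ(⊵⁻_i, C⁻_i)`. -/
noncomputable def FENPref.deltaMinus (pr : FENPref P i) (C : Finset P) : ℕ :=
  dirTau (insert i pr.enemies) pr.prefMinus (pr.coalMinus C)

/-- `δ(⊵_i, C) = δ⁺(⊵_i, C) + δ⁻(⊵_i, C)`. -/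
noncomputable def FENPref.delta (pr : FENPref P i) (C : Finset P) : ℕ :=
  pr.deltaPlus C + pr.deltaMinus C

end Game

/-!
If every friend is in `C` and no enemy is, then `C⁺_i = ⊵⁺_i` and `C⁻_i = ⊵⁻_i`, and
`→τ(R, R) = 0` because every linear extension of `R` is at distance `0` from itself.
Conversely, a friend `f ∉ C` lies strictly above `i` in `⊵⁺_i` but strictly below `i` in
`C⁺_i`, so every linear extension of `⊵⁺_i` and every linear extension of `C⁺_i` order the pair
`(f, i)` oppositely and `δ⁺ ≥ 1`; an enemy in `C` gives `δ⁻ ≥ 1` in the same way. The max–min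
defining `→τ` is over nonempty sets here because `C⁺_i` and `C⁻_i` are weak orders: they list
the friends (enemies) in `C`, then `i`, then the rest, and each block is ordered by `⊵_i` or its
reverse.
-/

section Orders

variable {P : Type*} {S : Finset P} {R R₁ R₂ A B : P → P → Prop}

theorem IsWeakOrderOn.flip (h : IsWeakOrderOn S R) : IsWeakOrderOn S (flip R) :=
  ⟨h.refl, fun x hx y hy z hz hxy hyz => h.trans z hz y hy x hx hyz hxy,
    fun x hx y hy => h.total y hy x hx⟩

theorem IsWeakOrderOn.exists_isLinExtOn (h : IsWeakOrderOn S R) : ∃ A, IsLinExtOn S R A := by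
  refine ⟨fun x y => strictOf R x y ∨ (indiffOf R x y ∧ WellOrderingRel x y), ?_, ?_, ?_, ?_⟩
  · rintro x - (⟨hxx, hxx'⟩ | ⟨-, hxx⟩)
    exacts [hxx' hxx, irrefl x hxx]
  · rintro x hx y hy z hz hxy hyz
    have := h.trans x hx y hy z hz
    have := h.trans y hy z hz x hx
    have := h.trans z hz x hx y hy
    have := IsTrans.trans (r := @WellOrderingRel P) x y z
    simp only [strictOf, indiffOf] at *
    tauto
  · intro x hx y hy hne
    have := h.total x hx y hy
    have := trichotomous_of WellOrderingRel x y
    simp only [strictOf, indiffOf]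
    tauto
  · exact fun x _ y _ => Or.inl

def discordantPairs (S : Finset P) (A B : P → P → Prop) : Set (P × P) :=
  {p : P × P | p.1 ∈ S ∧ p.2 ∈ S ∧ A p.1 p.2 ∧ B p.2 p.1}

theorem kendallTau_eq_ncard (S : Finset P) (A B : P → P → Prop) :
    kendallTau S A B = (discordantPairs S A B).ncard := rfl

theorem discordantPairs_subset (S : Finset P) (A B : P → P → Prop) :
    discordantPairs S A B ⊆ ↑(S ×ˢ S) :=
  fun _ hp => Finset.mem_product.2 ⟨hp.1, hp.2.1⟩

theorem discordantPairs_finite (S : Finset P) (A B : P → P → Prop) :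
    (discordantPairs S A B).Finite :=
  (S ×ˢ S).finite_toSet.subset (discordantPairs_subset S A B)

theorem kendallTau_le_card (S : Finset P) (A B : P → P → Prop) :
    kendallTau S A B ≤ (S ×ˢ S).card := by
  rw [kendallTau_eq_ncard, ← Set.ncard_coe_finset]
  exact Set.ncard_le_ncard (discordantPairs_subset S A B)

theorem IsLinExtOn.kendallTau_self (hA : IsLinExtOn S R A) : kendallTau S A A = 0 := by
  rw [kendallTau_eq_ncard, Set.ncard_eq_zero (discordantPairs_finite S A A)]
  exact Set.eq_empty_of_forall_notMem fun ⟨x, y⟩ ⟨hx, hy, hxy, hyx⟩ =>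
    hA.irrefl x hx (hA.trans x hx y hy x hx hxy hyx)

theorem kendallTau_pos (hA : IsLinExtOn S R₁ A) (hB : IsLinExtOn S R₂ B) {a b : P}
    (ha : a ∈ S) (hb : b ∈ S) (hab : strictOf R₁ a b) (hba : strictOf R₂ b a) :
    0 < kendallTau S A B :=
  (Set.ncard_pos (discordantPairs_finite S A B)).2
    ⟨(a, b), ha, hb, hA.extend a ha b hb hab, hB.extend b hb a ha hba⟩

theorem dirTau_self (S : Finset P) (R : P → P → Prop) : dirTau S R R = 0 := by
  refine Nat.eq_zero_of_le_zero (csSup_le' ?_)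
  rintro n ⟨B, hB, rfl⟩
  exact Nat.sInf_le ⟨B, hB, hB.kendallTau_self.symm⟩

theorem dirTau_pos (h₁ : IsWeakOrderOn S R₁) (h₂ : IsWeakOrderOn S R₂) {a b : P}
    (ha : a ∈ S) (hb : b ∈ S) (hab : strictOf R₁ a b) (hba : strictOf R₂ b a) :
    0 < dirTau S R₁ R₂ := by
  obtain ⟨A₀, hA₀⟩ := h₁.exists_isLinExtOn
  obtain ⟨B, hB⟩ := h₂.exists_isLinExtOn
  have hbdd : BddAbove {n : ℕ | ∃ B, IsLinExtOn S R₂ B ∧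
      n = sInf {m : ℕ | ∃ A, IsLinExtOn S R₁ A ∧ m = kendallTau S A B}} := by
    refine ⟨(S ×ˢ S).card, ?_⟩
    rintro n ⟨B', -, rfl⟩
    exact le_trans (Nat.sInf_le ⟨A₀, hA₀, rfl⟩) (kendallTau_le_card S A₀ B')
  obtain ⟨A, hA, hmin⟩ := Nat.sInf_mem (s := {m : ℕ | ∃ A, IsLinExtOn S R₁ A ∧
    m = kendallTau S A B}) ⟨_, A₀, hA₀, rfl⟩
  calc 0 < kendallTau S A B := kendallTau_pos hA hB ha hb hab hba
    _ = _ := hmin.symm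
    _ ≤ dirTau S R₁ R₂ := le_csSup hbdd ⟨B, hB, rfl⟩

end Orders

section Coalition

variable {P : Type*} {i : P} {F : Finset P} {R : P → P → Prop}

/-- `coalPlus C` is definitionally `coalitionOrder i friends C Rp`, and `coalMinus C` is
`coalitionOrder i enemies C (flip Rm)`. -/
def coalitionOrder (i : P) (F C : Finset P) (R : P → P → Prop) (x y : P) : Prop :=
  (x ∈ F ∧ x ∈ C ∧ y ∈ F ∧ y ∈ C ∧ R x y) ∨
  ((x ∈ F ∧ x ∈ C) ∧ (y = i ∨ (y ∈ F ∧ y ∉ C))) ∨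
  (x = i ∧ (y = i ∨ (y ∈ F ∧ y ∉ C))) ∨
  (x ∈ F ∧ x ∉ C ∧ y ∈ F ∧ y ∉ C ∧ R y x)

theorem IsWeakOrderOn.coalitionOrder [DecidableEq P] (hi : i ∉ F) (hR : IsWeakOrderOn F R)
    (C : Finset P) :
    IsWeakOrderOn (insert i F) (coalitionOrder i F C R) := by
  have := hR.refl
  have := hR.trans
  have := hR.total
  refine ⟨fun x hx => ?_, fun x hx y hy z hz hxy hyz => ?_, fun x hx y hy => ?_⟩ <;>
    simp only [Finset.mem_insert, _root_.coalitionOrder] at * <;> grind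

end Coalition

namespace FENPref

variable {P : Type*} {i : P} (pr : FENPref P i) (C : Finset P)

theorem coalPlus_eq_prefPlus (h : pr.friends ⊆ C) : pr.coalPlus C = pr.prefPlus := by
  ext x y
  unfold coalPlus prefPlus
  grind

theorem coalMinus_eq_prefMinus (h : Disjoint pr.enemies C) : pr.coalMinus C = pr.prefMinus := by
  have := Finset.disjoint_left.1 h
  ext x y
  unfold coalMinus prefMinus
  grind

variable [DecidableEq P]

theorem isWeakOrderOn_coalPlus : IsWeakOrderOn (insert i pr.friends) (pr.coalPlus C) :=
  pr.wo_p.coalitionOrder pr.self_not_friend C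

theorem isWeakOrderOn_coalMinus : IsWeakOrderOn (insert i pr.enemies) (pr.coalMinus C) :=
  pr.wo_m.flip.coalitionOrder pr.self_not_enemy C

theorem isWeakOrderOn_prefPlus : IsWeakOrderOn (insert i pr.friends) pr.prefPlus :=
  pr.coalPlus_eq_prefPlus _ (Finset.subset_insert i pr.friends) ▸ pr.isWeakOrderOn_coalPlus _

theorem isWeakOrderOn_prefMinus : IsWeakOrderOn (insert i pr.enemies) pr.prefMinus :=
  pr.coalMinus_eq_prefMinus ∅ (Finset.disjoint_empty_right _) ▸ pr.isWeakOrderOn_coalMinus ∅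

theorem deltaPlus_eq_zero_iff : pr.deltaPlus C = 0 ↔ pr.friends ⊆ C := by
  refine ⟨fun h f hf => ?_, fun h => by rw [deltaPlus, pr.coalPlus_eq_prefPlus C h, dirTau_self]⟩
  by_contra hfC
  have hi := pr.self_not_friend
  have above : strictOf pr.prefPlus f i := by simp only [strictOf, prefPlus]; grind
  have below : strictOf (pr.coalPlus C) i f := by simp only [strictOf, coalPlus]; grind
  exact (dirTau_pos pr.isWeakOrderOn_prefPlus (pr.isWeakOrderOn_coalPlus C)
    (Finset.mem_insert_of_mem hf) (Finset.mem_insert_self i _) above below).ne' h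

theorem deltaMinus_eq_zero_iff : pr.deltaMinus C = 0 ↔ Disjoint pr.enemies C := by
  refine ⟨fun h => Finset.disjoint_left.2 fun e he heC => ?_,
    fun h => by rw [deltaMinus, pr.coalMinus_eq_prefMinus C h, dirTau_self]⟩
  have hi := pr.self_not_enemy
  have above : strictOf pr.prefMinus i e := by simp only [strictOf, prefMinus]; grind
  have below : strictOf (pr.coalMinus C) e i := by simp only [strictOf, coalMinus]; grind
  exact (dirTau_pos pr.isWeakOrderOn_prefMinus (pr.isWeakOrderOn_coalMinus C)
    (Finset.mem_insert_self i _) (Finset.mem_insert_of_mem he) above below).ne' h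

end FENPref

theorem delta_eq_zero_iff_general {P : Type*} [DecidableEq P] {i : P} (pr : FENPref P i)
    (C : Finset P) :
    pr.delta C = 0 ↔ pr.friends ⊆ C ∧ pr.enemies ∩ C = ∅ := by
  rw [FENPref.delta, Nat.add_eq_zero_iff, pr.deltaPlus_eq_zero_iff, pr.deltaMinus_eq_zero_iff,
    Finset.disjoint_iff_inter_eq_empty]

/-- The distance `δ(⊵_i, C)` between a player's preference order and a coalition `C`
containing `i` is `0` if and only if `N⁺_i ⊆ C` and `N⁻_i ∩ C = ∅`. -/
theorem delta_eq_zero_iff {P : Type*} [DecidableEq P] {i : P} (pr : FENPref P i)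
    (C : Finset P) (hiC : i ∈ C) :
    pr.delta C = 0 ↔ pr.friends ⊆ C ∧ pr.enemies ∩ C = ∅ :=
  delta_eq_zero_iff_general pr C
end

section
/- (Adding an enemy worsens a coalition) For every player i, every coalition A containing i, and every enemy y ∈ N⁻_i ∖ A, it holds that δ(⊵_i, A ∪ {y}) > δ(⊵_i, A); in particular A ≻_i A ∪ {y}. -/
/-! ### Generic auxiliary lemmas -/

section AuxGeneric

variable {P : Type*}

/-- Lexicographic refinement of a weak order by a strict total order is a linear extension. -/
lemma lex_linext {S : Finset P} {R T : P → P → Prop}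
    (hR : IsWeakOrderOn S R)
    (hir : ∀ x ∈ S, ¬ T x x)
    (htr : ∀ x ∈ S, ∀ y ∈ S, ∀ z ∈ S, T x y → T y z → T x z)
    (hto : ∀ x ∈ S, ∀ y ∈ S, x ≠ y → T x y ∨ T y x) :
    IsLinExtOn S R (fun x y => strictOf R x y ∨ (R x y ∧ R y x ∧ T x y)) := by
  constructor
  · intro x hx h
    rcases h with ⟨h1, h2⟩ | ⟨_, _, h3⟩
    · exact h2 h1
    · exact hir x hx h3
  · intro x hx y hy z hz hxy hyz
    rcases hxy with ⟨h1, h2⟩ | ⟨h1, h1', ht1⟩ <;>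
      rcases hyz with ⟨g1, g2⟩ | ⟨g1, g1', gt1⟩
    · exact Or.inl ⟨hR.trans x hx y hy z hz h1 g1,
        fun hzx => h2 (hR.trans y hy z hz x hx g1 hzx)⟩
    · exact Or.inl ⟨hR.trans x hx y hy z hz h1 g1,
        fun hzx => h2 (hR.trans y hy z hz x hx g1 hzx)⟩
    · exact Or.inl ⟨hR.trans x hx y hy z hz h1 g1,
        fun hzx => g2 (hR.trans z hz x hx y hy hzx h1)⟩
    · exact Or.inr ⟨hR.trans x hx y hy z hz h1 g1,
        hR.trans z hz y hy x hx g1' h1', htr x hx y hy z hz ht1 gt1⟩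
  · intro x hx y hy hxy
    rcases hR.total x hx y hy with h | h
    · by_cases h' : R y x
      · rcases hto x hx y hy hxy with ht | ht
        · exact Or.inl (Or.inr ⟨h, h', ht⟩)
        · exact Or.inr (Or.inr ⟨h', h, ht⟩)
      · exact Or.inl (Or.inl ⟨h, h'⟩)
    · by_cases h' : R x y
      · rcases hto x hx y hy hxy with ht | ht
        · exact Or.inl (Or.inr ⟨h', h, ht⟩)
        · exact Or.inr (Or.inr ⟨h, h', ht⟩)
      · exact Or.inr (Or.inl ⟨h, h'⟩)
  · intro x _ y _ h
    exact Or.inl h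

lemma exists_linext {S : Finset P} {R : P → P → Prop} (hR : IsWeakOrderOn S R) :
    ∃ B, IsLinExtOn S R B := by
  haveI : IsWellOrder P WellOrderingRel := WellOrderingRel.isWellOrder
  refine ⟨_, lex_linext (T := WellOrderingRel) hR ?_ ?_ ?_⟩
  · intro x _; exact irrefl_of WellOrderingRel x
  · intro x _ y _ z _ h1 h2; exact _root_.trans h1 h2
  · intro x _ y _ hxy
    rcases trichotomous_of WellOrderingRel x y with h | h | h
    · exact Or.inl h
    · exact absurd h hxy
    · exact Or.inr h

/-- The key computation: when `R2` is decisive on all `R1`-strict pairs,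
the directed Hausdorff–Kendall-tau distance equals the number of pairs
on which the strict parts of `R1` and `R2` are opposed. -/
lemma dirTau_eq_ncard {S : Finset P} {R1 R2 : P → P → Prop}
    (h1 : IsWeakOrderOn S R1) (h2 : IsWeakOrderOn S R2)
    (hdec : ∀ x ∈ S, ∀ y ∈ S, strictOf R1 x y → strictOf R2 x y ∨ strictOf R2 y x) :
    dirTau S R1 R2 =
      Set.ncard {p : P × P | p.1 ∈ S ∧ p.2 ∈ S ∧ strictOf R1 p.1 p.2 ∧ strictOf R2 p.2 p.1} := by
  set G : Set (P × P) :=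
    {p : P × P | p.1 ∈ S ∧ p.2 ∈ S ∧ strictOf R1 p.1 p.2 ∧ strictOf R2 p.2 p.1} with hG
  have hSfin : (↑(S ×ˢ S) : Set (P × P)).Finite := (S ×ˢ S).finite_toSet
  have hsub : ∀ (T : Set (P × P)), (∀ p ∈ T, p.1 ∈ S ∧ p.2 ∈ S) → T.Finite := by
    intro T hT
    refine hSfin.subset ?_
    intro p hp
    simp only [Finset.coe_product, Set.mem_prod]
    exact ⟨(hT p hp).1, (hT p hp).2⟩
  have hGfin : G.Finite := hsub G (fun p hp => ⟨hp.1, hp.2.1⟩)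
  -- lower bound for any extensions
  have hlow : ∀ B, IsLinExtOn S R2 B → ∀ A, IsLinExtOn S R1 A →
      G.ncard ≤ kendallTau S A B := by
    intro B hB A hA
    apply Set.ncard_le_ncard
    · intro p hp
      obtain ⟨hp1, hp2, hs1, hs2⟩ := hp
      exact ⟨hp1, hp2, hA.extend p.1 hp1 p.2 hp2 hs1, hB.extend p.2 hp2 p.1 hp1 hs2⟩
    · exact hsub _ (fun p hp => ⟨hp.1, hp.2.1⟩)
  -- the lower bound is attained
  have hatt : ∀ B, IsLinExtOn S R2 B → ∃ A, IsLinExtOn S R1 A ∧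
      kendallTau S A B = G.ncard := by
    intro B hB
    refine ⟨_, lex_linext h1 hB.irrefl hB.trans hB.total, ?_⟩
    unfold kendallTau
    congr 1
    ext ⟨a, b⟩
    simp only [Set.mem_setOf_eq, hG]
    constructor
    · rintro ⟨hp1, hp2, hA, hBp⟩
      refine ⟨hp1, hp2, ?_, ?_⟩
      · rcases hA with h | ⟨_, _, hBpp⟩
        · exact h
        · by_cases hpe : a = b
          · subst hpe; exact absurd hBp (hB.irrefl a hp1)
          · exact absurd (hB.trans a hp1 b hp2 a hp1 hBpp hBp) (hB.irrefl a hp1)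
      · have hs1 : strictOf R1 a b := by
          rcases hA with h | ⟨_, _, hBpp⟩
          · exact h
          · by_cases hpe : a = b
            · subst hpe; exact absurd hBp (hB.irrefl a hp1)
            · exact absurd (hB.trans a hp1 b hp2 a hp1 hBpp hBp) (hB.irrefl a hp1)
        rcases hdec a hp1 b hp2 hs1 with h | h
        · exact absurd (hB.extend a hp1 b hp2 h) (fun hc => by
            by_cases hpe : a = b
            · subst hpe; exact (hB.irrefl a hp1) hc
            · exact (hB.irrefl a hp1) (hB.trans a hp1 b hp2 a hp1 hc hBp))
        · exact h
    · rintro ⟨hp1, hp2, hs1, hs2⟩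
      exact ⟨hp1, hp2, Or.inl hs1, hB.extend b hp2 a hp1 hs2⟩
  -- the inner inf is constant
  have hinf : ∀ B, IsLinExtOn S R2 B →
      sInf { m : ℕ | ∃ A : P → P → Prop, IsLinExtOn S R1 A ∧ m = kendallTau S A B }
        = G.ncard := by
    intro B hB
    obtain ⟨A, hA, hAeq⟩ := hatt B hB
    apply le_antisymm
    · exact Nat.sInf_le ⟨A, hA, hAeq.symm⟩
    · refine le_csInf ⟨_, A, hA, rfl⟩ ?_
      rintro m ⟨A', hA', rfl⟩
      exact hlow B hB A' hA'
  obtain ⟨B₀, hB₀⟩ := exists_linext h2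
  have : { n : ℕ | ∃ B : P → P → Prop, IsLinExtOn S R2 B ∧
      n = sInf { m : ℕ | ∃ A : P → P → Prop, IsLinExtOn S R1 A ∧ m = kendallTau S A B } }
      = {G.ncard} := by
    ext n
    simp only [Set.mem_setOf_eq, Set.mem_singleton_iff]
    constructor
    · rintro ⟨B, hB, rfl⟩; exact hinf B hB
    · rintro rfl; exact ⟨B₀, hB₀, (hinf B₀ hB₀).symm⟩
  rw [dirTau, this, csSup_singleton]

end AuxGeneric

/-! ### FEN-specific lemmas -/

section FENLemmas

variable {P : Type*} [DecidableEq P] {i : P}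

lemma prefMinus_wo (pr : FENPref P i) :
    IsWeakOrderOn (insert i pr.enemies) pr.prefMinus := by
  have hiE : i ∉ pr.enemies := pr.self_not_enemy
  constructor
  · intro x hx
    rcases Finset.mem_insert.1 hx with rfl | hx
    · exact Or.inl ⟨rfl, rfl⟩
    · exact Or.inr (Or.inr ⟨hx, hx, pr.wo_m.refl x hx⟩)
  · intro x _ y _ z _ hxy hyz
    rcases hxy with ⟨hx1, hy1⟩ | ⟨hx1, hyE⟩ | ⟨hxE, hyE, hR⟩
    · subst hx1; subst hy1; exact hyz
    · subst hx1
      rcases hyz with ⟨hy1, _⟩ | ⟨hy1, _⟩ | ⟨_, hzE, _⟩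
      · exact absurd (hy1 ▸ hyE) hiE
      · exact absurd (hy1 ▸ hyE) hiE
      · exact Or.inr (Or.inl ⟨rfl, hzE⟩)
    · rcases hyz with ⟨hy1, _⟩ | ⟨hy1, _⟩ | ⟨hyE', hzE, hR'⟩
      · exact absurd (hy1 ▸ hyE) hiE
      · exact absurd (hy1 ▸ hyE) hiE
      · exact Or.inr (Or.inr ⟨hxE, hzE, pr.wo_m.trans x hxE y hyE z hzE hR hR'⟩)
  · intro x hx y hy
    rcases Finset.mem_insert.1 hx with hx1 | hxE
    · subst hx1
      rcases Finset.mem_insert.1 hy with hy1 | hyE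
      · subst hy1; exact Or.inl (Or.inl ⟨rfl, rfl⟩)
      · exact Or.inl (Or.inr (Or.inl ⟨rfl, hyE⟩))
    · rcases Finset.mem_insert.1 hy with hy1 | hyE
      · subst hy1; exact Or.inr (Or.inr (Or.inl ⟨rfl, hxE⟩))
      · rcases pr.wo_m.total x hxE y hyE with h | h
        · exact Or.inl (Or.inr (Or.inr ⟨hxE, hyE, h⟩))
        · exact Or.inr (Or.inr (Or.inr ⟨hyE, hxE, h⟩))

lemma coalMinus_wo (pr : FENPref P i) (C : Finset P) :
    IsWeakOrderOn (insert i pr.enemies) (pr.coalMinus C) := by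
  have hiE : i ∉ pr.enemies := pr.self_not_enemy
  constructor
  · intro x hx
    rcases Finset.mem_insert.1 hx with rfl | hx
    · exact Or.inr (Or.inr (Or.inl ⟨rfl, Or.inl rfl⟩))
    · have := pr.wo_m.refl x hx
      by_cases hC : x ∈ C
      · exact Or.inl ⟨hx, hC, hx, hC, this⟩
      · exact Or.inr (Or.inr (Or.inr ⟨hx, hC, hx, hC, this⟩))
  · intro x _ y _ z _ hxy hyz
    rcases hxy with ⟨hxE, hxC, hyE, hyC, hRyx⟩ | ⟨⟨hxE, hxC⟩, hyd⟩ |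
      ⟨hx1, hyd⟩ | ⟨hxE, hxnC, hyE, hynC, hRxy⟩
    · rcases hyz with ⟨_, _, hzE, hzC, hRzy⟩ | ⟨_, hzd⟩ | ⟨hy1, _⟩ | ⟨_, hynC, _⟩
      · exact Or.inl ⟨hxE, hxC, hzE, hzC, pr.wo_m.trans z hzE y hyE x hxE hRzy hRyx⟩
      · exact Or.inr (Or.inl ⟨⟨hxE, hxC⟩, hzd⟩)
      · exact absurd (hy1 ▸ hyE) hiE
      · exact absurd hyC hynC
    · rcases hyd with hy1 | ⟨hyE, hynC⟩
      · subst hy1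
        rcases hyz with ⟨h, _⟩ | ⟨⟨h, _⟩, _⟩ | ⟨_, hzd⟩ | ⟨h, _⟩
        · exact absurd h hiE
        · exact absurd h hiE
        · exact Or.inr (Or.inl ⟨⟨hxE, hxC⟩, hzd⟩)
        · exact absurd h hiE
      · rcases hyz with ⟨_, h, _⟩ | ⟨⟨_, h⟩, _⟩ | ⟨h, _⟩ | ⟨_, _, hzE, hznC, _⟩
        · exact absurd h hynC
        · exact absurd h hynC
        · exact absurd (h ▸ hyE) hiE
        · exact Or.inr (Or.inl ⟨⟨hxE, hxC⟩, Or.inr ⟨hzE, hznC⟩⟩)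
    · subst hx1
      rcases hyd with hy1 | ⟨hyE, hynC⟩
      · subst hy1; exact hyz
      · rcases hyz with ⟨_, h, _⟩ | ⟨⟨_, h⟩, _⟩ | ⟨h, _⟩ | ⟨_, _, hzE, hznC, _⟩
        · exact absurd h hynC
        · exact absurd h hynC
        · exact absurd (h ▸ hyE) hiE
        · exact Or.inr (Or.inr (Or.inl ⟨rfl, Or.inr ⟨hzE, hznC⟩⟩))
    · rcases hyz with ⟨_, h, _⟩ | ⟨⟨_, h⟩, _⟩ | ⟨h, _⟩ | ⟨_, _, hzE, hznC, hRyz⟩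
      · exact absurd h hynC
      · exact absurd h hynC
      · exact absurd (h ▸ hyE) hiE
      · exact Or.inr (Or.inr (Or.inr ⟨hxE, hxnC, hzE, hznC,
          pr.wo_m.trans x hxE y hyE z hzE hRxy hRyz⟩))
  · intro x hx y hy
    rcases Finset.mem_insert.1 hx with hx1 | hxE
    · subst hx1
      rcases Finset.mem_insert.1 hy with hy1 | hyE
      · subst hy1; exact Or.inl (Or.inr (Or.inr (Or.inl ⟨rfl, Or.inl rfl⟩)))
      · by_cases hyC : y ∈ C
        · exact Or.inr (Or.inr (Or.inl ⟨⟨hyE, hyC⟩, Or.inl rfl⟩))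
        · exact Or.inl (Or.inr (Or.inr (Or.inl ⟨rfl, Or.inr ⟨hyE, hyC⟩⟩)))
    · rcases Finset.mem_insert.1 hy with hy1 | hyE
      · subst hy1
        by_cases hxC : x ∈ C
        · exact Or.inl (Or.inr (Or.inl ⟨⟨hxE, hxC⟩, Or.inl rfl⟩))
        · exact Or.inr (Or.inr (Or.inr (Or.inl ⟨rfl, Or.inr ⟨hxE, hxC⟩⟩)))
      · by_cases hxC : x ∈ C <;> by_cases hyC : y ∈ C
        · rcases pr.wo_m.total x hxE y hyE with h | h
          · exact Or.inr (Or.inl ⟨hyE, hyC, hxE, hxC, h⟩)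
          · exact Or.inl (Or.inl ⟨hxE, hxC, hyE, hyC, h⟩)
        · exact Or.inl (Or.inr (Or.inl ⟨⟨hxE, hxC⟩, Or.inr ⟨hyE, hyC⟩⟩))
        · exact Or.inr (Or.inr (Or.inl ⟨⟨hyE, hyC⟩, Or.inr ⟨hxE, hxC⟩⟩))
        · rcases pr.wo_m.total x hxE y hyE with h | h
          · exact Or.inl (Or.inr (Or.inr (Or.inr ⟨hxE, hxC, hyE, hyC, h⟩)))
          · exact Or.inr (Or.inr (Or.inr (Or.inr ⟨hyE, hyC, hxE, hxC, h⟩)))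

lemma strict_prefMinus_iff (pr : FENPref P i) {x y : P} :
    strictOf pr.prefMinus x y ↔
      (x = i ∧ y ∈ pr.enemies) ∨
      (x ∈ pr.enemies ∧ y ∈ pr.enemies ∧ pr.Rm x y ∧ ¬ pr.Rm y x) := by
  have hiE : i ∉ pr.enemies := pr.self_not_enemy
  constructor
  · rintro ⟨h, hn⟩
    rcases h with ⟨rfl, rfl⟩ | ⟨rfl, hyE⟩ | ⟨hxE, hyE, hR⟩
    · exact absurd (Or.inl ⟨rfl, rfl⟩) hn
    · exact Or.inl ⟨rfl, hyE⟩
    · refine Or.inr ⟨hxE, hyE, hR, fun hR' => hn ?_⟩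
      exact Or.inr (Or.inr ⟨hyE, hxE, hR'⟩)
  · rintro (⟨rfl, hyE⟩ | ⟨hxE, hyE, hR, hnR⟩)
    · refine ⟨Or.inr (Or.inl ⟨rfl, hyE⟩), ?_⟩
      rintro (⟨rfl, _⟩ | ⟨_, h⟩ | ⟨_, h, _⟩) <;> exact hiE (by assumption)
    · refine ⟨Or.inr (Or.inr ⟨hxE, hyE, hR⟩), ?_⟩
      rintro (⟨_, h⟩ | ⟨h, _⟩ | ⟨_, _, hR'⟩)
      · exact hiE (h ▸ hxE)
      · exact hiE (h ▸ hyE)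
      · exact hnR hR'

/-- If `b` is an enemy in `C`, then `b` is strictly above `i` in `coalMinus C`. -/
lemma sc1 (pr : FENPref P i) {C : Finset P} {b : P}
    (hbE : b ∈ pr.enemies) (hbC : b ∈ C) :
    strictOf (pr.coalMinus C) b i := by
  have hiE : i ∉ pr.enemies := pr.self_not_enemy
  have hbi : b ≠ i := fun h => hiE (h ▸ hbE)
  refine ⟨Or.inr (Or.inl ⟨⟨hbE, hbC⟩, Or.inl rfl⟩), ?_⟩
  rintro (⟨h, _⟩ | ⟨⟨h, _⟩, _⟩ | ⟨_, (h | ⟨_, h⟩)⟩ | ⟨h, _⟩)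
  · exact hiE h
  · exact hiE h
  · exact hbi h
  · exact h hbC
  · exact hiE h

/-- If `a, b` are enemies, `a` strictly preferred to `b`, and `b ∈ C`, then
`b` is strictly above `a` in `coalMinus C`. -/
lemma sc2 (pr : FENPref P i) {C : Finset P} {a b : P}
    (haE : a ∈ pr.enemies) (hbE : b ∈ pr.enemies)
    (hR : pr.Rm a b) (hnR : ¬ pr.Rm b a) (hbC : b ∈ C) :
    strictOf (pr.coalMinus C) b a := by
  have hiE : i ∉ pr.enemies := pr.self_not_enemy
  have hai : a ≠ i := fun h => hiE (h ▸ haE)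
  have hbi : b ≠ i := fun h => hiE (h ▸ hbE)
  by_cases haC : a ∈ C
  · refine ⟨Or.inl ⟨hbE, hbC, haE, haC, hR⟩, ?_⟩
    rintro (⟨_, _, _, _, h⟩ | ⟨_, (h | ⟨_, h⟩)⟩ | ⟨h, _⟩ | ⟨_, h, _⟩)
    · exact hnR h
    · exact hbi h
    · exact h hbC
    · exact hai h
    · exact h haC
  · refine ⟨Or.inr (Or.inl ⟨⟨hbE, hbC⟩, Or.inr ⟨haE, haC⟩⟩), ?_⟩
    rintro (⟨_, h, _⟩ | ⟨⟨_, h⟩, _⟩ | ⟨h, _⟩ | ⟨_, _, _, h, _⟩)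
    · exact haC h
    · exact haC h
    · exact hai h
    · exact h hbC

/-- If `b` is an enemy not in `C`, then `i` is strictly above `b` in `coalMinus C`. -/
lemma sc3 (pr : FENPref P i) {C : Finset P} {b : P}
    (hbE : b ∈ pr.enemies) (hbC : b ∉ C) :
    strictOf (pr.coalMinus C) i b := by
  have hiE : i ∉ pr.enemies := pr.self_not_enemy
  have hbi : b ≠ i := fun h => hiE (h ▸ hbE)
  refine ⟨Or.inr (Or.inr (Or.inl ⟨rfl, Or.inr ⟨hbE, hbC⟩⟩)), ?_⟩
  rintro (⟨_, _, h, _⟩ | ⟨⟨_, h⟩, _⟩ | ⟨h, _⟩ | ⟨_, _, h, _⟩)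
  · exact hiE h
  · exact hbC h
  · exact hbi h
  · exact hiE h

/-- Enemies in `C` are strictly above enemies not in `C`. -/
lemma sc4 (pr : FENPref P i) {C : Finset P} {a b : P}
    (haE : a ∈ pr.enemies) (hbE : b ∈ pr.enemies) (haC : a ∈ C) (hbC : b ∉ C) :
    strictOf (pr.coalMinus C) a b := by
  have hiE : i ∉ pr.enemies := pr.self_not_enemy
  have hai : a ≠ i := fun h => hiE (h ▸ haE)
  have hbi : b ≠ i := fun h => hiE (h ▸ hbE)
  refine ⟨Or.inr (Or.inl ⟨⟨haE, haC⟩, Or.inr ⟨hbE, hbC⟩⟩), ?_⟩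
  rintro (⟨_, h, _⟩ | ⟨⟨_, h⟩, _⟩ | ⟨h, _⟩ | ⟨_, _, _, h, _⟩)
  · exact hbC h
  · exact hbC h
  · exact hbi h
  · exact h haC

/-- Among enemies not in `C`, the order follows `Rm`. -/
lemma sc5 (pr : FENPref P i) {C : Finset P} {a b : P}
    (haE : a ∈ pr.enemies) (hbE : b ∈ pr.enemies)
    (hR : pr.Rm a b) (hnR : ¬ pr.Rm b a) (haC : a ∉ C) (hbC : b ∉ C) :
    strictOf (pr.coalMinus C) a b := by
  have hiE : i ∉ pr.enemies := pr.self_not_enemy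
  have hai : a ≠ i := fun h => hiE (h ▸ haE)
  have hbi : b ≠ i := fun h => hiE (h ▸ hbE)
  refine ⟨Or.inr (Or.inr (Or.inr ⟨haE, haC, hbE, hbC, hR⟩)), ?_⟩
  rintro (⟨_, h, _⟩ | ⟨⟨_, h⟩, _⟩ | ⟨h, _⟩ | ⟨_, _, _, _, h⟩)
  · exact hbC h
  · exact hbC h
  · exact hbi h
  · exact hnR h

lemma coalMinus_decisive (pr : FENPref P i) (C : Finset P) :
    ∀ x ∈ insert i pr.enemies, ∀ y ∈ insert i pr.enemies,
      strictOf pr.prefMinus x y →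
        strictOf (pr.coalMinus C) x y ∨ strictOf (pr.coalMinus C) y x := by
  intro x _ y _ hs
  rcases (strict_prefMinus_iff pr).1 hs with ⟨hxi, hyE⟩ | ⟨hxE, hyE, hR, hnR⟩
  · subst hxi
    by_cases hyC : y ∈ C
    · exact Or.inr (sc1 pr hyE hyC)
    · exact Or.inl (sc3 pr hyE hyC)
  · by_cases hyC : y ∈ C
    · exact Or.inr (sc2 pr hxE hyE hR hnR hyC)
    · by_cases hxC : x ∈ C
      · exact Or.inl (sc4 pr hxE hyE hxC hyC)
      · exact Or.inl (sc5 pr hxE hyE hR hnR hxC hyC)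

/-- Monotonicity: opposed pairs for `C` remain opposed for any `C' ⊇ C`. -/
lemma coalMinus_strict_mono (pr : FENPref P i) {C C' : Finset P} (hCC : C ⊆ C')
    {a b : P} (h1 : strictOf pr.prefMinus a b) (h2 : strictOf (pr.coalMinus C) b a) :
    strictOf (pr.coalMinus C') b a := by
  have hiE : i ∉ pr.enemies := pr.self_not_enemy
  rcases (strict_prefMinus_iff pr).1 h1 with ⟨hai, hbE⟩ | ⟨haE, hbE, hR, hnR⟩
  · subst hai
    have hbC : b ∈ C := by
      rcases h2.1 with ⟨_, _, h, _⟩ | ⟨⟨_, h⟩, _⟩ | ⟨h, _⟩ | ⟨_, _, h, _⟩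
      · exact absurd h hiE
      · exact h
      · exact absurd (h ▸ hbE) hiE
      · exact absurd h hiE
    exact sc1 pr hbE (hCC hbC)
  · have hbC : b ∈ C := by
      rcases h2.1 with ⟨_, h, _⟩ | ⟨⟨_, h⟩, _⟩ | ⟨h, _⟩ | ⟨_, _, _, _, h⟩
      · exact h
      · exact h
      · exact absurd (h ▸ hbE) hiE
      · exact absurd h hnR
    exact sc2 pr haE hbE hR hnR (hCC hbC)

end FENLemmas

/-- Adding an enemy worsens a coalition: for every player `i`, coalition `A ∋ i`,
and enemy `y ∈ N⁻_i ∖ A`, we have `δ(⊵_i, A ∪ {y}) > δ(⊵_i, A)`,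
i.e. `A ≻_i A ∪ {y}`. -/
theorem adding_enemy_worsens {P : Type*} [DecidableEq P] {i : P} (pr : FENPref P i)
    (A : Finset P) (hiA : i ∈ A) (y : P) (hy : y ∈ pr.enemies) (hyA : y ∉ A) :
    pr.delta A < pr.delta (insert y A) := by
  have hiE : i ∉ pr.enemies := pr.self_not_enemy
  -- the plus part does not change
  have hplus : pr.coalPlus (insert y A) = pr.coalPlus A := by
    funext u v
    have hu : u ∈ pr.friends → (u ∈ insert y A ↔ u ∈ A) := by
      intro hF
      have : u ≠ y := fun h => (Finset.disjoint_left.1 pr.disj hF) (h ▸ hy)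
      simp [Finset.mem_insert, this]
    have hv : v ∈ pr.friends → (v ∈ insert y A ↔ v ∈ A) := by
      intro hF
      have : v ≠ y := fun h => (Finset.disjoint_left.1 pr.disj hF) (h ▸ hy)
      simp [Finset.mem_insert, this]
    apply propext
    unfold FENPref.coalPlus
    by_cases huF : u ∈ pr.friends <;> by_cases hvF : v ∈ pr.friends
    · rw [hu huF, hv hvF]
    · simp [huF, hvF, hu huF]
    · simp [huF, hvF, hv hvF]
    · simp [huF, hvF]
  -- the minus part strictly increases
  have hSfin : ∀ (T : Set (P × P)),
      (∀ p ∈ T, p.1 ∈ insert i pr.enemies ∧ p.2 ∈ insert i pr.enemies) → T.Finite := by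
    intro T hT
    refine ((insert i pr.enemies) ×ˢ (insert i pr.enemies)).finite_toSet.subset ?_
    intro p hp
    simp only [Finset.coe_product, Set.mem_prod]
    exact ⟨(hT p hp).1, (hT p hp).2⟩
  have e1 := dirTau_eq_ncard (prefMinus_wo pr) (coalMinus_wo pr A)
    (coalMinus_decisive pr A)
  have e2 := dirTau_eq_ncard (prefMinus_wo pr) (coalMinus_wo pr (insert y A))
    (coalMinus_decisive pr (insert y A))
  have hminus : pr.deltaMinus A < pr.deltaMinus (insert y A) := by
    rw [FENPref.deltaMinus, FENPref.deltaMinus, e1, e2]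
    apply Set.ncard_lt_ncard
    · rw [Set.ssubset_iff_of_subset]
      · refine ⟨(i, y), ⟨Finset.mem_insert_self i _, Finset.mem_insert_of_mem hy,
          (strict_prefMinus_iff pr).2 (Or.inl ⟨rfl, hy⟩),
          sc1 pr hy (Finset.mem_insert_self y A)⟩, ?_⟩
        rintro ⟨-, -, -, h2⟩
        have : y ∈ A := by
          rcases h2.1 with ⟨_, _, h, _⟩ | ⟨⟨_, h⟩, _⟩ | ⟨h, _⟩ | ⟨_, _, h, _⟩
          · exact absurd h hiE
          · exact h
          · have h' : y = i := h
            subst h'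
            exact absurd hy hiE
          · exact absurd h hiE
        exact hyA this
      · intro p hp
        exact ⟨hp.1, hp.2.1, hp.2.2.1,
          coalMinus_strict_mono pr (Finset.subset_insert y A) hp.2.2.1 hp.2.2.2⟩
    · exact hSfin _ (fun p hp => ⟨hp.1, hp.2.1⟩)
  have hplus' : pr.deltaPlus (insert y A) = pr.deltaPlus A := by
    unfold FENPref.deltaPlus
    rw [hplus]
  unfold FENPref.delta
  omega
end
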